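/- Let f ∈ L²(Ω, H) and g ∈ L²(Ω, K) with covariance operators E_ff and E_gf, and suppose E_ff has complete orthonormal eigenvector system (x_α)_{α∈A} with eigenvalues λ_α ≥ 0, where A₊ = {α : λ_α > 0} is countable. Let T† denote the generalized inverse of E_ff. Then E_gf (I − T† E_ff) = 0, equivalently E_gf = E_gf T† E_ff, where T† E_ff is the orthogonal projection onto the closure of span{x_α : α ∈ A₊}. -/

import Mathlib

open MeasureTheory
open scoped InnerProductSpace

/-!
For every `x`, `⟪x, E_ff x⟫ = ∫ |⟪x, f ω⟫|² dμ`, so an eigenvector of `E_ff` with eigenvalue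
`λ ≤ 0` is almost surely orthogonal to `f`. If `v - P v` is expanded in the Hilbert basis, only basis
vectors with eigenvalue `λ ≤ 0` occur, and since only countably many of them do, `f ω` is almost surely
orthogonal to all of them at once. Hence `⟪f ω, v - P v⟫ = 0` almost surely, which kills the
integrand of `E_gf (v - P v)`.
-/

namespace MeasureTheory.MemLp

variable {𝕜 Ω E : Type*} [RCLike 𝕜] [MeasurableSpace Ω] {μ : Measure Ω}
  [NormedAddCommGroup E] [InnerProductSpace 𝕜 E]

theorem integrable_inner_smul {f : Ω → E} (hf : MemLp f 2 μ) (x : E) :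
    Integrable (fun ω => ⟪f ω, x⟫_𝕜 • f ω) μ :=
  memLp_one_iff_integrable.1 (hf.smul (hf.inner_const x))

variable [NormedSpace ℝ E] [CompleteSpace E]

theorem inner_integral_inner_smul {f : Ω → E} (hf : MemLp f 2 μ) (x : E) :
    ⟪x, ∫ ω, ⟪f ω, x⟫_𝕜 • f ω ∂μ⟫_𝕜 = ∫ ω, ((‖⟪x, f ω⟫_𝕜‖ ^ 2 : ℝ) : 𝕜) ∂μ := by
  rw [← integral_inner (hf.integrable_inner_smul x)]
  congr 1 with ω
  rw [inner_smul_right, ← inner_conj_symm (f ω) x, RCLike.conj_mul]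
  norm_cast

theorem ae_inner_eq_zero_of_eigen_nonpos {f : Ω → E} (hf : MemLp f 2 μ)
    {x : E} {c : ℝ} (hc : c ≤ 0) (hx : ∫ ω, ⟪f ω, x⟫_𝕜 • f ω ∂μ = (c : 𝕜) • x) :
    ∀ᵐ ω ∂μ, ⟪x, f ω⟫_𝕜 = 0 := by
  have hint : Integrable (fun ω => ‖⟪x, f ω⟫_𝕜‖ ^ 2) μ :=
    (hf.const_inner (𝕜 := 𝕜) x).integrable_norm_pow two_ne_zero
  have hle : ∫ ω, ‖⟪x, f ω⟫_𝕜‖ ^ 2 ∂μ ≤ 0 :=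
    calc ∫ ω, ‖⟪x, f ω⟫_𝕜‖ ^ 2 ∂μ = RCLike.re ⟪x, ∫ ω, ⟪f ω, x⟫_𝕜 • f ω ∂μ⟫_𝕜 := by
          rw [hf.inner_integral_inner_smul, ← integral_re (hint.ofReal (𝕜 := 𝕜))]
          simp only [RCLike.ofReal_re]
      _ = c * ‖x‖ ^ 2 := by
          rw [hx, inner_smul_right, inner_self_eq_norm_sq_to_K]
          norm_cast
      _ ≤ 0 := mul_nonpos_of_nonpos_of_nonneg hc (sq_nonneg _)
  have hzero := (integral_eq_zero_iff_of_nonneg (fun ω => by positivity) hint).1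
    (le_antisymm hle (integral_nonneg fun ω => by positivity))
  filter_upwards [hzero] with ω hω
  simpa using hω

end MeasureTheory.MemLp

namespace HilbertBasis

variable {ι 𝕜 E : Type*} [RCLike 𝕜] [NormedAddCommGroup E] [InnerProductSpace 𝕜 E]
  (b : HilbertBasis ι 𝕜 E)

theorem inner_tsum_subtype_inner_smul [CompleteSpace E] {p : ι → Prop} (v : E) {i : ι}
    (hi : p i) :
    ⟪b i, ∑' j : {j // p j}, ⟪b j, v⟫_𝕜 • b j⟫_𝕜 = ⟪b i, v⟫_𝕜 := by
  have hsum : Summable fun j : {j // p j} => ⟪b j, v⟫_𝕜 • b j := by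
    have := (b.hasSum_repr v).summable.subtype {j | p j}
    simp only [b.repr_apply_apply] at this
    exact this
  rw [← innerSL_apply_apply, (innerSL 𝕜 (b i)).map_tsum hsum, tsum_eq_single ⟨i, hi⟩]
  · simp [b.orthonormal.1 i]
  · intro j hj
    rw [innerSL_apply_apply, inner_smul_right,
      b.orthonormal.inner_eq_zero fun h => hj (Subtype.ext h.symm), mul_zero]

theorem ae_inner_eq_zero {Ω : Type*} [MeasurableSpace Ω] {μ : Measure Ω} {F : Ω → E} {w : E}
    (h : ∀ i, ⟪b i, w⟫_𝕜 ≠ 0 → ∀ᵐ ω ∂μ, ⟪b i, F ω⟫_𝕜 = 0) :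
    ∀ᵐ ω ∂μ, ⟪F ω, w⟫_𝕜 = 0 := by
  have hS : {i | ⟪b i, w⟫_𝕜 ≠ 0}.Countable := by
    simpa only [Function.support, ne_eq, pow_eq_zero_iff two_ne_zero, norm_eq_zero]
      using (b.orthonormal.inner_products_summable w).countable_support
  filter_upwards [(ae_ball_iff hS).2 h] with ω hω
  rw [← b.tsum_inner_mul_inner]
  refine (tsum_congr fun i => ?_).trans tsum_zero
  by_cases hi : ⟪b i, w⟫_𝕜 = 0
  · rw [hi, mul_zero]
  · rw [← inner_conj_symm, hω i hi, map_zero, zero_mul]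

end HilbertBasis

theorem stmt_19_general {Ω : Type*} [MeasurableSpace Ω] (μ : Measure Ω)
    {H : Type*} [NormedAddCommGroup H] [InnerProductSpace ℂ H] [CompleteSpace H]
    {K : Type*} [NormedAddCommGroup K] [InnerProductSpace ℂ K]
    (f : Ω → H) (hf : MemLp f 2 μ) (g : Ω → K)
    {A : Type*} (b : HilbertBasis A ℂ H) (lam : A → ℝ)
    (heig : ∀ α : A, (∫ ω, ⟪f ω, b α⟫_ℂ • f ω ∂μ) = ((lam α : ℝ) : ℂ) • b α)
    (P : H → H)
    (hP : ∀ x : H, P x = ∑' α : {α : A // 0 < lam α}, ⟪b α.1, x⟫_ℂ • b α.1) :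
    (∀ v : H, (∫ ω, ⟪f ω, v - P v⟫_ℂ • g ω ∂μ) = 0) ∧
    (∀ v : H, (∫ ω, ⟪f ω, v⟫_ℂ • g ω ∂μ) = ∫ ω, ⟪f ω, P v⟫_ℂ • g ω ∂μ) := by
  have hker : ∀ v, ∀ᵐ ω ∂μ, ⟪f ω, v - P v⟫_ℂ = 0 := fun v =>
    b.ae_inner_eq_zero fun α hα => hf.ae_inner_eq_zero_of_eigen_nonpos
      (not_lt.1 fun hpos => hα <| by
        rw [inner_sub_right, hP, b.inner_tsum_subtype_inner_smul _ hpos, sub_self])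
      (heig α)
  refine ⟨fun v => integral_eq_zero_of_ae ?_, fun v => integral_congr_ae ?_⟩
  · filter_upwards [hker v] with ω hω
    simp [hω]
  · filter_upwards [hker v] with ω hω
    rw [inner_sub_right, sub_eq_zero] at hω
    simp [hω]

/-- If the auto-covariance `E_ff` has a complete orthonormal system of eigenvectors
`(x_α)_{α∈A}` with eigenvalues `λ_α ≥ 0`, where `A₊ = {α : λ_α > 0}` is countable, and
`T† E_ff` is the orthogonal projection `P : x ↦ Σ_{α∈A₊} ⟨x, x_α⟩ x_α`, then
`E_gf (I − P) = 0`, equivalently `E_gf = E_gf ∘ P`. -/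
theorem stmt_19 {Ω : Type*} [MeasurableSpace Ω] (μ : Measure Ω) [IsProbabilityMeasure μ]
    {H : Type*} [NormedAddCommGroup H] [InnerProductSpace ℂ H] [CompleteSpace H]
    {K : Type*} [NormedAddCommGroup K] [InnerProductSpace ℂ K] [CompleteSpace K]
    (f : Ω → H) (hf : MemLp f 2 μ) (g : Ω → K) (hg : MemLp g 2 μ)
    {A : Type*} (b : HilbertBasis A ℂ H) (lam : A → ℝ) (hnn : ∀ α, 0 ≤ lam α)
    (heig : ∀ α : A, (∫ ω, ⟪f ω, b α⟫_ℂ • f ω ∂μ) = ((lam α : ℝ) : ℂ) • b α)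
    (hcount : Countable {α : A // 0 < lam α})
    (P : H → H)
    (hP : ∀ x : H, P x = ∑' α : {α : A // 0 < lam α}, ⟪b α.1, x⟫_ℂ • b α.1) :
    (∀ v : H, (∫ ω, ⟪f ω, v - P v⟫_ℂ • g ω ∂μ) = 0) ∧
    (∀ v : H, (∫ ω, ⟪f ω, v⟫_ℂ • g ω ∂μ) = ∫ ω, ⟪f ω, P v⟫_ℂ • g ω ∂μ) :=
  stmt_19_general μ f hf g b lam heig P hP
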